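/- The bilinear form ψ(f∂, g∂) = q^{-1} ∫ g ∂³ f, equal to Σ_n f_{n+1} g_{-n+1} [n+1][n][n−1] q^{3n−1}, is NOT antisymmetric in general: there exist Laurent polynomials f, g with ψ(f∂,g∂) ≠ −ψ(g∂,f∂), provided q ≠ 0, ±1. -/

import Mathlib

open Finsupp

noncomputable section

/-- Laurent polynomials as finitely supported coefficient functions. -/
abbrev LP := ℤ →₀ ℝ

/-- q-number [m] = (q^m - q^{-m})/(q - q⁻¹). -/
def qn (q : ℝ) (m : ℤ) : ℝ := (q ^ m - q ^ (-m)) / (q - q⁻¹)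

/-- Multiplication of Laurent polynomials. -/
def lmul (f g : LP) : LP := f.sum fun n a => g.sum fun m b => Finsupp.single (n + m) (a * b)

/-- (τ f)(z) = f (q z). -/
def tau (q : ℝ) (f : LP) : LP := f.sum fun n a => Finsupp.single n (q ^ n * a)

/-- τ⁻¹. -/
def tauInv (q : ℝ) (f : LP) : LP := tau q⁻¹ f

/-- ∂_q f (z) = (f(qz) - f(q⁻¹z)) / ((q - q⁻¹) z), i.e. ∂_q z^n = [n] z^{n-1}. -/
def dq (q : ℝ) (f : LP) : LP := f.sum fun n a => Finsupp.single (n - 1) (qn q n * a)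

/-- ∂ = ∂_q τ, so ∂ z^m = q^m [m] z^{m-1}. -/
def dd (q : ℝ) (f : LP) : LP := dq q (tau q f)

/-- ∂̂ = ∂_q τ⁻¹. -/
def dhat (q : ℝ) (f : LP) : LP := dq q (tauInv q f)

/-- Residue: coefficient of z⁻¹. -/
def intg (f : LP) : ℝ := f (-1)


/-- ψ(f∂, g∂) = q⁻¹ ∫ g (∂³ f). -/
def psi (q : ℝ) (f g : LP) : ℝ := q⁻¹ * intg (lmul g (dd q (dd q (dd q f))))

/-!
On monomials ψ is diagonal: `ψ(z^(n+1), z^(1-n)) = [n+1][n][n-1] q^(3n-1)`. Pairing `z³` with `z⁻¹`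
(that is, `n = 2` one way and `n = -2` the other) and using `[-k] = -[k]` gives
`ψ(z³, z⁻¹) + ψ(z⁻¹, z³) = [3][2][1] (q⁵ - q⁻⁷)`, which vanishes only if `|q| = 1`.
-/

section LinearOrderedField

variable {K : Type*} [Field K] [LinearOrder K] [IsStrictOrderedRing K] {q : K}

theorem zpow_injective_of_abs_ne_one (hq0 : q ≠ 0) (hq1 : |q| ≠ 1) :
    Function.Injective fun n : ℤ ↦ q ^ n := fun m n h ↦
  zpow_right_injective₀ (abs_pos.2 hq0) hq1 (by simp only [← abs_zpow, h])

theorem abs_ne_one_of_ne_one_of_ne_neg_one (hq1 : q ≠ 1) (hqm1 : q ≠ -1) : |q| ≠ 1 := by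
  rw [Ne, abs_eq zero_le_one]
  tauto

end LinearOrderedField

theorem qn_neg (q : ℝ) (m : ℤ) : qn q (-m) = -qn q m := by
  rw [qn, qn, neg_neg, ← neg_div, neg_sub]

theorem qn_ne_zero {q : ℝ} (hq0 : q ≠ 0) (hq : |q| ≠ 1) {m : ℤ} (hm : m ≠ 0) : qn q m ≠ 0 := by
  have hinj := zpow_injective_of_abs_ne_one hq0 hq
  have hnum : q ^ m - q ^ (-m) ≠ 0 := sub_ne_zero.2 fun h ↦ hm (by linarith [hinj h])
  have hden : q - q⁻¹ ≠ 0 := sub_ne_zero.2 fun h ↦ by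
    simpa using hinj (show q ^ (1 : ℤ) = q ^ (-1 : ℤ) by simpa using h)
  exact div_ne_zero hnum hden

theorem tau_single (q : ℝ) (n : ℤ) (a : ℝ) : tau q (single n a) = single n (q ^ n * a) := by
  simp [tau]

theorem dq_single (q : ℝ) (n : ℤ) (a : ℝ) : dq q (single n a) = single (n - 1) (qn q n * a) := by
  simp [dq]

theorem dd_single (q : ℝ) (n : ℤ) (a : ℝ) :
    dd q (single n a) = single (n - 1) (q ^ n * qn q n * a) := by
  rw [dd, tau_single, dq_single, mul_left_comm, mul_assoc]

theorem lmul_single_single (n m : ℤ) (a b : ℝ) :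
    lmul (single n a) (single m b) = single (n + m) (a * b) := by
  simp [lmul]

theorem psi_single_single {q : ℝ} (hq0 : q ≠ 0) (n : ℤ) (a b : ℝ) :
    psi q (single (n + 1) a) (single (1 - n) b) =
      b * a * qn q (n + 1) * qn q n * qn q (n - 1) * q ^ (3 * n - 1) := by
  have hpow : q⁻¹ * (q ^ (n - 1) * (q ^ n * q ^ (n + 1))) = q ^ (3 * n - 1) := by
    rw [← zpow_neg_one, ← zpow_add₀ hq0, ← zpow_add₀ hq0, ← zpow_add₀ hq0]
    ring_nf
  simp only [psi, intg, dd_single, lmul_single_single, add_sub_cancel_right, single_apply,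
    show 1 - n + (n - 1 - 1) = -1 by ring, if_pos]
  rw [← hpow]
  ring

theorem stmt11 (q : ℝ) (hq0 : q ≠ 0) (hq1 : q ≠ 1) (hqm1 : q ≠ -1) :
    ∃ f g : LP, psi q f g ≠ - psi q g f := by
  have hq := abs_ne_one_of_ne_one_of_ne_neg_one hq1 hqm1
  refine ⟨single 3 1, single (-1) 1, fun h ↦ ?_⟩
  have hfg := psi_single_single hq0 2 1 1
  have hgf := psi_single_single hq0 (-2) 1 1
  norm_num [qn_neg] at hfg hgf
  have hqn : qn q 3 * qn q 2 * qn q 1 ≠ 0 := by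
    refine mul_ne_zero (mul_ne_zero ?_ ?_) ?_ <;> exact qn_ne_zero hq0 hq (by norm_num)
  have hcancel : qn q 3 * qn q 2 * qn q 1 * q ^ 5 = qn q 3 * qn q 2 * qn q 1 * (q ^ 7)⁻¹ := by
    rw [hfg, hgf] at h
    linear_combination h
  have hpow : q ^ (5 : ℤ) = q ^ (-7 : ℤ) := by simpa using mul_left_cancel₀ hqn hcancel
  simpa using zpow_injective_of_abs_ne_one hq0 hq hpow
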